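/- (Proposition 2.1) Assume G is conserved by X. For every x ∈ E one has X(x) − v₀(x) = 0 if and only if X(x) = 0 and v₀(x) = 0. -/
import Mathlib


open scoped RealInnerProductSpace BigOperators
open Filter Topology

/-- `Σ^{(a₁,…,a_r)}_{(b₁,…,b_s)}`: the `r × s` real matrix whose `(i,j)` entry is `⟪b j, a i⟫`. -/
noncomputable def sigmaMat {E : Type*} [NormedAddCommGroup E] [InnerProductSpace ℝ E]
    {r s : ℕ} (a : Fin r → E) (b : Fin s → E) : Matrix (Fin r) (Fin s) ℝ :=
  Matrix.of fun i j => ⟪b j, a i⟫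

/-- The standard control vector `v₀(w₁,…,w_{k+1},u)`: there are `k+1` vectors `w`
(`k+1 ≥ 1` encodes the requirement that the number of `w`-vectors is at least one).
With `0`-indexing, the sign `(-1)^(i+k+1)` below is the paper's `(-1)^{i+k+1}` for
`1`-indexed `i` and `k+1` vectors. -/
noncomputable def stdControl {E : Type*} [NormedAddCommGroup E] [InnerProductSpace ℝ E]
    {k : ℕ} (w : Fin (k + 1) → E) (u : E) : E :=
  (∑ i : Fin (k + 1),
      ((-1 : ℝ) ^ ((i : ℕ) + k + 1) *
        (sigmaMat w (Fin.snoc (w ∘ i.succAbove) u)).det) • w i) +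
    (sigmaMat w w).det • u

/-- The family of gradients `(∇F₁(x),…,∇F_{k+1}(x),∇G(x))`. -/
noncomputable def gradFam {E : Type*} [NormedAddCommGroup E] [InnerProductSpace ℝ E]
    [FiniteDimensional ℝ E] {k : ℕ} (F : Fin (k + 1) → E → ℝ) (G : E → ℝ) (x : E) :
    Fin (k + 1 + 1) → E :=
  Fin.snoc (fun i => gradient (F i) x) (gradient G x)

/-- The standard control vector field `x ↦ v₀(∇F₁(x),…,∇F_{k+1}(x),∇G(x))`. -/
noncomputable def v0Field {E : Type*} [NormedAddCommGroup E] [InnerProductSpace ℝ E]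
    [FiniteDimensional ℝ E] {k : ℕ} (F : Fin (k + 1) → E → ℝ) (G : E → ℝ) (x : E) : E :=
  stdControl (fun i => gradient (F i) x) (gradient G x)

/-- `det Σ^{(∇F₁(x),…,∇F_{k+1}(x),∇G(x))}_{(∇F₁(x),…,∇F_{k+1}(x),∇G(x))}`. -/
noncomputable def gramDetFG {E : Type*} [NormedAddCommGroup E] [InnerProductSpace ℝ E]
    [FiniteDimensional ℝ E] {k : ℕ} (F : Fin (k + 1) → E → ℝ) (G : E → ℝ) (x : E) : ℝ :=
  (sigmaMat (gradFam F G x) (gradFam F G x)).det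

/-- The set `Inv = {x | det Σ^{(∇F(x),∇G(x))}_{(∇F(x),∇G(x))} = 0}`. -/
def invSet {E : Type*} [NormedAddCommGroup E] [InnerProductSpace ℝ E]
    [FiniteDimensional ℝ E] {k : ℕ} (F : Fin (k + 1) → E → ℝ) (G : E → ℝ) : Set E :=
  {x | gramDetFG F G x = 0}

lemma snoc_succAbove_castSucc {E : Type*} {k : ℕ} (w : Fin (k + 1) → E) (u : E)
    (i : Fin (k + 1)) (b : Fin (k + 1)) :
    (Fin.snoc w u : Fin (k + 2) → E) ((Fin.castSucc i).succAbove b) =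
      (Fin.snoc (w ∘ i.succAbove) u : Fin (k + 1) → E) b := by
  induction b using Fin.lastCases with
  | last =>
    have h : (Fin.castSucc i).succAbove (Fin.last k) = Fin.last (k + 1) := by
      rw [Fin.succAbove_of_le_castSucc _ _ (by
        simpa using Fin.le_last i), Fin.succ_last]
    rw [h]
    simp
  | cast b =>
    rw [Fin.castSucc_succAbove_castSucc]
    simp

lemma inner_stdControl {E : Type*} [NormedAddCommGroup E] [InnerProductSpace ℝ E]
    {k : ℕ} (w : Fin (k + 1) → E) (u : E) (y : E) :
    ⟪y, stdControl w u⟫ = (sigmaMat (Fin.snoc w y) (Fin.snoc w u)).det := by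
  rw [Matrix.det_succ_row (sigmaMat (Fin.snoc w y) (Fin.snoc w u)) (Fin.last (k + 1)),
    Fin.sum_univ_castSucc, stdControl, inner_add_right, inner_sum]
  congr 1
  · refine Finset.sum_congr rfl fun i _ => ?_
    have hsub : (sigmaMat (Fin.snoc w y) (Fin.snoc w u)).submatrix
        (Fin.last (k + 1)).succAbove (Fin.castSucc i).succAbove =
        sigmaMat w (Fin.snoc (w ∘ i.succAbove) u) := by
      ext a b
      simp only [Matrix.submatrix_apply, Fin.succAbove_last, sigmaMat, Matrix.of_apply,
        Fin.snoc_castSucc, snoc_succAbove_castSucc]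
    rw [real_inner_smul_right, hsub]
    simp only [sigmaMat, Matrix.of_apply, Fin.snoc_last, Fin.snoc_castSucc, Fin.val_last,
      Fin.coe_castSucc]
    rw [real_inner_comm]
    ring_nf
  · have hsub : (sigmaMat (Fin.snoc w y) (Fin.snoc w u)).submatrix
        (Fin.last (k + 1)).succAbove (Fin.last (k + 1)).succAbove = sigmaMat w w := by
      ext a b
      simp [sigmaMat, Fin.succAbove_last]
    rw [real_inner_smul_right, hsub]
    simp only [sigmaMat, Matrix.of_apply, Fin.snoc_last, Fin.val_last]
    rw [real_inner_comm]
    have h2 : ((-1 : ℝ)) ^ (k + 1 + (k + 1)) = 1 := by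
      rw [show k + 1 + (k + 1) = 2 * (k + 1) by ring, pow_mul]
      norm_num
    rw [h2]
    ring

lemma inner_w_stdControl {E : Type*} [NormedAddCommGroup E] [InnerProductSpace ℝ E]
    {k : ℕ} (w : Fin (k + 1) → E) (u : E) (i : Fin (k + 1)) :
    ⟪w i, stdControl w u⟫ = 0 := by
  rw [inner_stdControl]
  refine Matrix.det_zero_of_row_eq (i := Fin.castSucc i) (j := Fin.last (k + 1))
    (Fin.ne_of_lt (Fin.castSucc_lt_last i)) ?_
  funext j
  simp [sigmaMat]

/-- Proposition 2.1: if `G` is conserved by `X`, then `X x - v₀ x = 0`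
iff `X x = 0` and `v₀ x = 0`. -/
theorem perturbed_equilibrium_iff {E : Type*} [NormedAddCommGroup E] [InnerProductSpace ℝ E]
    [FiniteDimensional ℝ E] {k : ℕ} (F : Fin (k + 1) → E → ℝ) (G : E → ℝ) (X : E → E)
    (hF : ∀ i, ContDiff ℝ 1 (F i)) (hG : ContDiff ℝ 1 G)
    (hcons : ∀ y : E, ⟪gradient G y, X y⟫ = 0) :
    ∀ x : E, X x - v0Field F G x = 0 ↔ (X x = 0 ∧ v0Field F G x = 0) := by
  intro x
  constructor
  · intro h
    have hx : X x = v0Field F G x := by rwa [sub_eq_zero] at h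
    set w : Fin (k + 1) → E := fun i => gradient (F i) x with hw
    set u : E := gradient G x with hu0
    have hu : ⟪u, stdControl w u⟫ = 0 := by
      have := hcons x
      rw [hx] at this
      exact this
    have key : ∀ z : E, (∀ i : Fin (k + 1), ⟪w i, z⟫ = 0) → ⟪u, z⟫ = 0 →
        ⟪stdControl w u, z⟫ = 0 := by
      intro z hwz huz
      rw [stdControl, inner_add_left, sum_inner]
      have h1 : ∀ i : Fin (k + 1),
          ⟪((-1 : ℝ) ^ ((i : ℕ) + k + 1) *
            (sigmaMat w (Fin.snoc (w ∘ i.succAbove) u)).det) • w i, z⟫ = 0 := by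
        intro i
        rw [real_inner_smul_left, hwz, mul_zero]
      rw [Finset.sum_congr rfl fun i _ => h1 i, Finset.sum_const_zero,
        real_inner_smul_left, huz, mul_zero, add_zero]
    have hv : v0Field F G x = 0 := by
      rw [← @inner_self_eq_zero ℝ]
      exact key (stdControl w u) (fun i => inner_w_stdControl w u i) hu
    exact ⟨hx.trans hv, hv⟩
  · rintro ⟨h1, h2⟩
    rw [h1, h2, sub_zero]
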